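/- Let k ≥ 2 be an integer and let A be a lazy deterministic online algorithm for the k-Server with Preferences Problem on the uniform metric on a set of k+1 points. For every rational s with k/(2k−1) ≤ s ≤ 1 and every real C, there exist an initial configuration and a request sequence σ such that: every request of σ requires a movement of A; the fraction of specific requests among all requests of σ equals s; OPT(σ) ≥ C; and A's cost on σ is at least (1/(2s−1))·OPT(σ). -/

import Mathlib

/-!
Framework for the k-Server with Preferences Problem.

Servers are indexed by a type `K`, points of the metric space by a type `P`,
and the distance is given by a function `d : P → P → ℝ`.

A request is either general (any server may serve it) or specific
(a designated server must serve it).  A configuration assigns to each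
server a point.  A deterministic online algorithm maps the initial
configuration together with the list of requests seen so far to its
current configuration; its cost is the total distance travelled.
`OPT` is the infimum cost over all offline sequences of configurations
serving the requests in order, starting from the same initial
configuration.
-/

namespace KServerPref

inductive Request (K P : Type) where
  | general (v : P) : Request K P
  | specific (j : K) (v : P) : Request K P

variable {K P : Type}

/-- The point at which a request appears. -/
def Request.point : Request K P → P
  | .general v => v
  | .specific _ v => v

/-- Whether a request is specific. -/
def Request.isSpec : Request K P → Bool
  | .general _ => false
  | .specific _ _ => true

/-- A configuration `cfg` serves a request. -/
def Serves (cfg : K → P) : Request K P → Prop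
  | .general v => ∃ j, cfg j = v
  | .specific j v => cfg j = v

instance instDecidableServes [Fintype K] [DecidableEq P] (cfg : K → P) :
    (r : Request K P) → Decidable (Serves cfg r)
  | .general v => inferInstanceAs (Decidable (∃ j, cfg j = v))
  | .specific j v => inferInstanceAs (Decidable (cfg j = v))

/-- A deterministic online algorithm: maps the initial configuration and the
history of requests received so far to the current configuration. -/
def Alg (K P : Type) := (K → P) → List (Request K P) → (K → P)

/-- The algorithm starts in the initial configuration, and after each request
arrives it is in a configuration serving that request. -/
def IsOnline (A : Alg K P) : Prop :=
  (∀ c₀, A c₀ [] = c₀) ∧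
  ∀ (c₀ : K → P) (l : List (Request K P)) (r : Request K P),
    Serves (A c₀ (l ++ [r])) r

/-- Total distance travelled when going from configuration `c` to `c'`. -/
def configCost [Fintype K] (d : P → P → ℝ) (c c' : K → P) : ℝ :=
  ∑ j, d (c j) (c' j)

/-- Total movement cost of the online algorithm `A` on the request sequence `σ`
starting from the initial configuration `c₀`. -/
def algCost [Fintype K] (d : P → P → ℝ) (A : Alg K P) (c₀ : K → P)
    (σ : List (Request K P)) : ℝ :=
  ∑ i ∈ Finset.range σ.length,
    configCost d (A c₀ (σ.take i)) (A c₀ (σ.take (i + 1)))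

/-- An offline sequence of configurations `os` starts at `c₀` and serves the
requests of `σ` in order. -/
def ServesSeq (c₀ : K → P) (σ : List (Request K P)) (os : ℕ → K → P) : Prop :=
  os 0 = c₀ ∧ ∀ i : Fin σ.length, Serves (os (i.1 + 1)) (σ.get i)

/-- Total movement cost of an offline sequence of configurations on `σ`. -/
def offlineCost [Fintype K] (d : P → P → ℝ) (σ : List (Request K P))
    (os : ℕ → K → P) : ℝ :=
  ∑ i ∈ Finset.range σ.length, configCost d (os i) (os (i + 1))

/-- The optimal offline cost on `σ`, starting from `c₀`. -/
noncomputable def OPT [Fintype K] (d : P → P → ℝ) (c₀ : K → P)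
    (σ : List (Request K P)) : ℝ :=
  sInf {x | ∃ os, ServesSeq c₀ σ os ∧ offlineCost d σ os = x}

/-- The uniform metric: distance `1` between any two distinct points. -/
def unif [DecidableEq P] (x y : P) : ℝ := if x = y then 0 else 1

end KServerPref

namespace KServerPref

variable {K P : Type}

/-- A lazy online algorithm never moves when the arriving request is already served,
and otherwise moves exactly one server, onto the request's point. -/
def IsLazy (A : Alg K P) : Prop :=
  ∀ (c₀ : K → P) (l : List (Request K P)) (r : Request K P),
    (Serves (A c₀ l) r → A c₀ (l ++ [r]) = A c₀ l) ∧
    (¬ Serves (A c₀ l) r →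
      ∃ j, A c₀ (l ++ [r]) j = r.point ∧
        ∀ j', j' ≠ j → A c₀ (l ++ [r]) j' = A c₀ l j')

/-- Every request of `σ` requires a movement of `A`: at its arrival, the current
configuration of `A` does not serve it. -/
def AllRequireMove (A : Alg K P) (c₀ : K → P) (σ : List (Request K P)) : Prop :=
  ∀ i : Fin σ.length, ¬ Serves (A c₀ (σ.take i.1)) (σ.get i)

/-- The fraction of specific requests among all requests of `σ` equals `s`. -/
def SpecFraction (σ : List (Request K P)) (s : ℚ) : Prop :=
  ((σ.countP Request.isSpec : ℚ)) / (σ.length : ℚ) = s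

end KServerPref

section Aux

namespace KServerPref

variable {K P : Type}

lemma unif_nonneg [DecidableEq P] (x y : P) : 0 ≤ unif x y := by
  unfold unif; split <;> norm_num

lemma unif_eq_one [DecidableEq P] {x y : P} (h : x ≠ y) : unif x y = 1 := by
  unfold unif; simp [h]

lemma unif_self [DecidableEq P] (x : P) : unif x x = 0 := by simp [unif]

lemma configCost_nonneg [Fintype K] [DecidableEq P] (c c' : K → P) :
    0 ≤ configCost (unif (P := P)) c c' :=
  Finset.sum_nonneg fun j _ => unif_nonneg _ _

lemma configCost_self [Fintype K] [DecidableEq P] (c : K → P) :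
    configCost (unif (P := P)) c c = 0 := by
  unfold configCost; simp [unif_self]

lemma configCost_update [Fintype K] [DecidableEq K] [DecidableEq P] (c : K → P)
    (j : K) (v : P) (h : c j ≠ v) :
    configCost (unif (P := P)) c (Function.update c j v) = 1 := by
  unfold configCost
  rw [Finset.sum_eq_single j]
  · simp [Function.update_self, unif_eq_one h]
  · intro j' _ hj'
    simp [Function.update_of_ne hj', unif_self]
  · simp

lemma eq_of_configCost_lt_one [Fintype K] [DecidableEq P] {c c' : K → P}
    (h : configCost (unif (P := P)) c c' < 1) : c = c' := by
  classical
  by_contra hne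
  obtain ⟨j, hj⟩ : ∃ j, c j ≠ c' j := by
    by_contra hc; push_neg at hc; exact hne (funext hc)
  have h1 : unif (c j) (c' j) ≤ configCost (unif (P := P)) c c' :=
    Finset.single_le_sum (f := fun j => unif (c j) (c' j))
      (fun i _ => unif_nonneg _ _) (Finset.mem_univ j)
  rw [unif_eq_one hj] at h1
  linarith

lemma configCost_ge_point [Fintype K] [DecidableEq P] (c c' : K → P) (j : K) :
    unif (c j) (c' j) ≤ configCost (unif (P := P)) c c' :=
  Finset.single_le_sum (f := fun j => unif (c j) (c' j))
    (fun i _ => unif_nonneg _ _) (Finset.mem_univ j)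

/-- There is always a hole: a point occupied by no server. -/
lemma hole_exists (c : Fin k → Fin (k + 1)) : ∃ v, ∀ j, c j ≠ v := by
  by_contra h
  push_neg at h
  have hsurj : Function.Surjective c := fun v => h v
  have := Fintype.card_le_of_surjective c hsurj
  simp at this

noncomputable def hole (c : Fin k → Fin (k + 1)) : Fin (k + 1) :=
  (hole_exists c).choose

lemma hole_spec (c : Fin k → Fin (k + 1)) (j : Fin k) : c j ≠ hole c :=
  (hole_exists c).choose_spec j

section Lazy

variable {k : ℕ} (A : Alg (Fin k) (Fin (k + 1))) (c₀ : Fin k → Fin (k + 1))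
lemma step_specific (hA : IsOnline A) (hlazy : IsLazy A) (L : List (Request (Fin k) (Fin (k + 1)))) (j : Fin k)
    (v : Fin (k + 1)) (h : A c₀ L j ≠ v) :
    A c₀ (L ++ [.specific j v]) = Function.update (A c₀ L) j v := by
  have hns : ¬ Serves (A c₀ L) (.specific j v) := h
  obtain ⟨j₀, hj₀, hrest⟩ := (hlazy c₀ L (.specific j v)).2 hns
  have hserves : Serves (A c₀ (L ++ [.specific j v])) (.specific j v) := hA.2 _ _ _
  have hj : A c₀ (L ++ [.specific j v]) j = v := hserves
  have hjj : j₀ = j := by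
    by_contra hne
    have := hrest j (Ne.symm hne)
    rw [hj] at this
    exact h this.symm
  subst hjj
  funext j'
  by_cases hj' : j' = j₀
  · subst hj'; simpa [Function.update_self] using hj
  · rw [Function.update_of_ne hj']
    exact hrest j' hj'

lemma step_general (hA : IsOnline A) (hlazy : IsLazy A) (L : List (Request (Fin k) (Fin (k + 1))))
    (v : Fin (k + 1)) (h : ∀ j, A c₀ L j ≠ v) :
    ∃ j, A c₀ (L ++ [.general v]) = Function.update (A c₀ L) j v ∧ A c₀ L j ≠ v := by
  have hns : ¬ Serves (A c₀ L) (.general v) := by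
    rintro ⟨j, hj⟩; exact h j hj
  obtain ⟨j₀, hj₀, hrest⟩ := (hlazy c₀ L (.general v)).2 hns
  refine ⟨j₀, ?_, h j₀⟩
  funext j'
  by_cases hj' : j' = j₀
  · subst hj'; simpa [Function.update_self, Request.point] using hj₀
  · rw [Function.update_of_ne hj']
    exact hrest j' hj'

/-- Each forced step costs exactly 1. -/
lemma step_cost (hA : IsOnline A) (hlazy : IsLazy A) (L : List (Request (Fin k) (Fin (k + 1))))
    (r : Request (Fin k) (Fin (k + 1))) (h : ¬ Serves (A c₀ L) r) :
    configCost (unif (P := Fin (k+1))) (A c₀ L) (A c₀ (L ++ [r])) = 1 := by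
  cases r with
  | general v =>
      have h' : ∀ j, A c₀ L j ≠ v := by
        intro j hj; exact h ⟨j, hj⟩
      obtain ⟨j, hj, hji⟩ := step_general A c₀ hA hlazy L v h'
      rw [hj]
      exact configCost_update _ _ _ hji
  | specific j v =>
      have h' : A c₀ L j ≠ v := h
      rw [step_specific A c₀ hA hlazy L j v h']
      exact configCost_update _ _ _ h'

end Lazy

end KServerPref

end Aux
namespace KServerPref

section Adversary

variable {k : ℕ} [NeZero k] (A : Alg (Fin k) (Fin (k + 1))) (c₀ : Fin k → Fin (k + 1))

/-- The server that the lazy algorithm moves to answer a general request. -/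
noncomputable def moverOf (L : List (Request (Fin k) (Fin (k + 1)))) (v : Fin (k + 1)) :
    Fin k :=
  if h : ∃ j : Fin k, A c₀ (L ++ [Request.general v]) = Function.update (A c₀ L) j v ∧
      A c₀ L j ≠ v then h.choose else ⟨0, NeZero.pos k⟩

lemma moverOf_spec (hA : IsOnline A) (hlazy : IsLazy A)
    (L : List (Request (Fin k) (Fin (k + 1)))) (v : Fin (k + 1))
    (h : ∀ j, A c₀ L j ≠ v) :
    A c₀ (L ++ [Request.general v]) = Function.update (A c₀ L) (moverOf A c₀ L v) v ∧
      A c₀ L (moverOf A c₀ L v) ≠ v := by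
  have hex : ∃ j : Fin k, A c₀ (L ++ [Request.general v]) = Function.update (A c₀ L) j v ∧
      A c₀ L j ≠ v := by
    obtain ⟨j, hj, hj2⟩ := step_general A c₀ hA hlazy L v h
    exact ⟨j, hj, hj2⟩
  rw [moverOf, dif_pos hex]
  exact hex.choose_spec

/-- A choice of a server not among the movers. -/
noncomputable def finalI (movers : List (Fin k)) : Fin k :=
  if h : ∃ i : Fin k, i ∉ movers then h.choose else ⟨0, NeZero.pos k⟩

lemma finalI_spec (movers : List (Fin k)) (hlen : movers.length < k) :
    finalI movers ∉ movers := by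
  have hex : ∃ i : Fin k, i ∉ movers := by
    by_contra hc
    push_neg at hc
    have h1 : (Finset.univ : Finset (Fin k)) ⊆ movers.toFinset := fun i _ => by
      simpa using hc i
    have h2 := Finset.card_le_card h1
    have h3 := movers.toFinset_card_le
    simp at h2
    omega
  rw [finalI, dif_pos hex]
  exact hex.choose_spec

/-- The general/specific pairs of a type-A block. -/
noncomputable def pairs :
    ℕ → List (Request (Fin k) (Fin (k + 1))) →
      List (Request (Fin k) (Fin (k + 1))) × List (Fin k)
  | 0, _ => ([], [])
  | p + 1, L =>
      let c := A c₀ L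
      let h := hole c
      let j := moverOf A c₀ L h
      let rest := pairs p (L ++ [Request.general h, Request.specific j (c j)])
      (Request.general h :: Request.specific j (c j) :: rest.1, j :: rest.2)

/-- A full type-A block. -/
noncomputable def blockA (L : List (Request (Fin k) (Fin (k + 1)))) :
    List (Request (Fin k) (Fin (k + 1))) :=
  (pairs A c₀ (k - 1) L).1 ++
    [Request.specific (finalI (pairs A c₀ (k - 1) L).2) (hole (A c₀ L))]

/-- The type-A phase. -/
noncomputable def runA : ℕ → List (Request (Fin k) (Fin (k + 1)))
  | 0 => []
  | m + 1 => runA m ++ blockA A c₀ (runA m)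

/-- The type-B phase, appended after `base`. -/
noncomputable def runB (base : List (Request (Fin k) (Fin (k + 1)))) :
    ℕ → List (Request (Fin k) (Fin (k + 1)))
  | 0 => base
  | q + 1 => runB base q ++
      [Request.specific ⟨0, NeZero.pos k⟩ (hole (A c₀ (runB base q))),
       Request.specific ⟨0, NeZero.pos k⟩ (A c₀ (runB base q) ⟨0, NeZero.pos k⟩)]

/-- Every request of `M`, issued after history `L`, forces a move. -/
def ForcedFrom (L M : List (Request (Fin k) (Fin (k + 1)))) : Prop :=
  ∀ (i : ℕ) (h : i < M.length), ¬ Serves (A c₀ (L ++ M.take i)) (M.get ⟨i, h⟩)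

lemma forcedFrom_nil (L : List (Request (Fin k) (Fin (k + 1)))) :
    ForcedFrom A c₀ L [] := by
  intro i h
  simp at h

lemma forcedFrom_single (L : List (Request (Fin k) (Fin (k + 1))))
    (r : Request (Fin k) (Fin (k + 1))) (h : ¬ Serves (A c₀ L) r) :
    ForcedFrom A c₀ L [r] := by
  intro i hi
  have h0 : i = 0 := by simp at hi; omega
  subst h0
  simpa using h

lemma forcedFrom_append {L M M' : List (Request (Fin k) (Fin (k + 1)))}
    (h1 : ForcedFrom A c₀ L M) (h2 : ForcedFrom A c₀ (L ++ M) M') :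
    ForcedFrom A c₀ L (M ++ M') := by
  intro i hi
  by_cases hc : i < M.length
  · have ht : (M ++ M').take i = M.take i := List.take_append_of_le_length (le_of_lt hc)
    have hg : (M ++ M').get ⟨i, hi⟩ = M.get ⟨i, hc⟩ := by
      simp [List.getElem_append_left hc]
    rw [ht, hg]
    exact h1 i hc
  · push_neg at hc
    obtain ⟨i', rfl⟩ : ∃ i', i = M.length + i' := ⟨i - M.length, by omega⟩
    have hi' : i' < M'.length := by
      have := hi
      simp at this
      omega
    have ht : (M ++ M').take (M.length + i') = M ++ M'.take i' := List.take_length_add_append i'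
    have hg : (M ++ M').get ⟨M.length + i', hi⟩ = M'.get ⟨i', hi'⟩ := by
      simp [List.getElem_append_right (Nat.le_add_right _ _)]
    rw [ht, hg, ← List.append_assoc]
    exact h2 i' hi'

end Adversary

end KServerPref
namespace KServerPref

section BlockSpec

variable {k : ℕ} [NeZero k] (A : Alg (Fin k) (Fin (k + 1))) (c₀ : Fin k → Fin (k + 1))

lemma pairs_spec (hA : IsOnline A) (hlazy : IsLazy A) (p : ℕ) :
    ∀ (L : List (Request (Fin k) (Fin (k + 1)))),
      A c₀ (L ++ (pairs A c₀ p L).1) = A c₀ L ∧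
      (pairs A c₀ p L).1.length = 2 * p ∧
      (pairs A c₀ p L).1.countP Request.isSpec = p ∧
      (pairs A c₀ p L).2.length = p ∧
      ForcedFrom A c₀ L (pairs A c₀ p L).1 ∧
      (∀ i : Fin k, i ∉ (pairs A c₀ p L).2 →
        ∀ r ∈ (pairs A c₀ p L).1,
          Serves (Function.update (A c₀ L) i (hole (A c₀ L))) r) := by
  induction p with
  | zero =>
      intro L
      refine ⟨by simp [pairs], by simp [pairs], by simp [pairs], by simp [pairs],
        by simpa [pairs] using forcedFrom_nil A c₀ L, by simp [pairs]⟩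
  | succ p IH =>
      intro L
      set e := A c₀ L with he
      set h := hole e with hh
      set j := moverOf A c₀ L h with hj
      have hnh : ∀ j', e j' ≠ h := fun j' => hole_spec e j'
      obtain ⟨hm1, hm2⟩ := moverOf_spec A c₀ hA hlazy L h hnh
      -- the two requests
      set r1 : Request (Fin k) (Fin (k + 1)) := Request.general h with hr1
      set r2 : Request (Fin k) (Fin (k + 1)) := Request.specific j (e j) with hr2
      set L' := L ++ [r1, r2] with hL'
      have hsplit : L' = (L ++ [r1]) ++ [r2] := by simp [hL']
      have hc1 : A c₀ (L ++ [r1]) = Function.update e j h := hm1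
      have hc2 : A c₀ L' = e := by
        rw [hsplit]
        have hne : A c₀ (L ++ [r1]) j ≠ e j := by
          rw [hc1, Function.update_self]
          exact fun hx => hnh j hx.symm
        rw [step_specific A c₀ hA hlazy _ j (e j) hne, hc1,
          Function.update_idem, Function.update_eq_self]
      obtain ⟨I1, I2, I3, I4, I5, I6⟩ := IH L'
      have hdef : pairs A c₀ (p + 1) L =
          (r1 :: r2 :: (pairs A c₀ p L').1, j :: (pairs A c₀ p L').2) := rfl
      refine ⟨?_, ?_, ?_, ?_, ?_, ?_⟩
      · rw [hdef]
        have : L ++ (r1 :: r2 :: (pairs A c₀ p L').1) = L' ++ (pairs A c₀ p L').1 := by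
          simp [hL']
        rw [this, I1, hc2]
      · rw [hdef]; simp only [List.length_cons]; omega
      · rw [hdef]
        simp only [List.countP_cons, hr1, hr2]
        simp [Request.isSpec, I3]
      · rw [hdef]; simp [I4]
      · rw [hdef]
        have hstep : ForcedFrom A c₀ L [r1, r2] := by
          have f1 : ForcedFrom A c₀ L [r1] := by
            apply forcedFrom_single
            rintro ⟨j', hj'⟩
            exact hnh j' hj'
          have f2 : ForcedFrom A c₀ (L ++ [r1]) [r2] := by
            apply forcedFrom_single
            intro hs
            have : A c₀ (L ++ [r1]) j = e j := hs
            rw [hc1, Function.update_self] at this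
            exact hnh j this.symm
          have := forcedFrom_append A c₀ f1 f2
          simpa using this
        have hrest : ForcedFrom A c₀ (L ++ [r1, r2]) (pairs A c₀ p L').1 := I5
        have := forcedFrom_append A c₀ hstep hrest
        simpa using this
      · rw [hdef]
        intro i hi r hr
        have hij : i ≠ j := by
          intro hx; exact hi (by rw [hx]; exact List.mem_cons_self)
        have hirest : i ∉ (pairs A c₀ p L').2 := fun hx => hi (List.mem_cons_of_mem _ hx)
        rcases List.mem_cons.1 hr with rfl | hr'
        · exact ⟨i, Function.update_self _ _ _⟩
        rcases List.mem_cons.1 hr' with rfl | hr''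
        · show Function.update e i h j = e j
          exact Function.update_of_ne (Ne.symm hij) _ _
        · have := I6 i hirest r hr''
          rwa [hc2] at this

lemma blockA_spec (hA : IsOnline A) (hlazy : IsLazy A) (hk : 1 ≤ k)
    (L : List (Request (Fin k) (Fin (k + 1)))) :
    A c₀ (L ++ blockA A c₀ L) =
      Function.update (A c₀ L) (finalI (pairs A c₀ (k - 1) L).2) (hole (A c₀ L)) ∧
    (blockA A c₀ L).length = 2 * k - 1 ∧
    (blockA A c₀ L).countP Request.isSpec = k ∧
    ForcedFrom A c₀ L (blockA A c₀ L) ∧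
    (∀ r ∈ blockA A c₀ L,
      Serves (Function.update (A c₀ L) (finalI (pairs A c₀ (k - 1) L).2) (hole (A c₀ L))) r) := by
  set e := A c₀ L with he
  set h := hole e with hh
  obtain ⟨I1, I2, I3, I4, I5, I6⟩ := pairs_spec A c₀ hA hlazy (k - 1) L
  set i := finalI (pairs A c₀ (k - 1) L).2 with hi
  have hinot : i ∉ (pairs A c₀ (k - 1) L).2 := by
    apply finalI_spec
    rw [I4]; omega
  have hbdef : blockA A c₀ L = (pairs A c₀ (k - 1) L).1 ++ [Request.specific i h] := rfl
  have hce : A c₀ (L ++ (pairs A c₀ (k - 1) L).1) = e := I1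
  have heih : e i ≠ h := hole_spec e i
  have hcfin : A c₀ (L ++ blockA A c₀ L) = Function.update e i h := by
    rw [hbdef, ← List.append_assoc]
    rw [step_specific A c₀ hA hlazy _ i h (by rw [hce]; exact heih), hce]
  refine ⟨hcfin, ?_, ?_, ?_, ?_⟩
  · rw [hbdef]; simp only [List.length_append, List.length_singleton, I2]; omega
  · rw [hbdef]
    simp only [List.countP_append, I3, List.countP_singleton]
    simp [Request.isSpec]
    omega
  · rw [hbdef]
    apply forcedFrom_append A c₀ I5
    apply forcedFrom_single
    intro hs
    have : A c₀ (L ++ (pairs A c₀ (k - 1) L).1) i = h := hs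
    rw [hce] at this
    exact heih this
  · rw [hbdef]
    intro r hr
    rcases List.mem_append.1 hr with hr' | hr'
    · exact I6 i hinot r hr'
    · have : r = Request.specific i h := by simpa using hr'
      rw [this]
      exact Function.update_self _ _ _

end BlockSpec

end KServerPref
namespace KServerPref

section RunSpec

variable {k : ℕ} [NeZero k] (A : Alg (Fin k) (Fin (k + 1))) (c₀ : Fin k → Fin (k + 1))

/-- Configuration of the algorithm at the start of type-A block `m`. -/
noncomputable def eA (m : ℕ) : Fin k → Fin (k + 1) := A c₀ (runA A c₀ m)

/-- The server receiving the final specific request of type-A block `m`. -/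
noncomputable def iA (m : ℕ) : Fin k :=
  finalI (pairs A c₀ (k - 1) (runA A c₀ m)).2

lemma getElem_middle {α : Type} (L M T : List α) (i : ℕ) (hi : i < M.length)
    (hidx : L.length + i < (L ++ M ++ T).length) :
    (L ++ M ++ T)[L.length + i]'hidx = M[i]'hi := by
  have h1 : L.length + i < (L ++ M).length := by simp; omega
  rw [List.getElem_append_left h1, List.getElem_append_right (by omega)]
  congr 1
  omega

lemma runA_succ (m : ℕ) :
    runA A c₀ (m + 1) = runA A c₀ m ++ blockA A c₀ (runA A c₀ m) := rfl

lemma eA_zero (hA : IsOnline A) : eA A c₀ 0 = c₀ := hA.1 c₀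

lemma eA_succ (hA : IsOnline A) (hlazy : IsLazy A) (hk : 1 ≤ k) (m : ℕ) :
    eA A c₀ (m + 1) = Function.update (eA A c₀ m) (iA A c₀ m) (hole (eA A c₀ m)) :=
  (blockA_spec A c₀ hA hlazy hk (runA A c₀ m)).1

lemma runA_length (hA : IsOnline A) (hlazy : IsLazy A) (hk : 1 ≤ k) (m : ℕ) :
    (runA A c₀ m).length = (2 * k - 1) * m := by
  induction m with
  | zero => simp [runA]
  | succ m IH =>
      rw [runA_succ, List.length_append, IH,
        (blockA_spec A c₀ hA hlazy hk (runA A c₀ m)).2.1]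
      ring_nf

lemma runA_countP (hA : IsOnline A) (hlazy : IsLazy A) (hk : 1 ≤ k) (m : ℕ) :
    (runA A c₀ m).countP Request.isSpec = k * m := by
  induction m with
  | zero => simp [runA]
  | succ m IH =>
      rw [runA_succ, List.countP_append, IH,
        (blockA_spec A c₀ hA hlazy hk (runA A c₀ m)).2.2.1]
      ring

lemma runA_forced (hA : IsOnline A) (hlazy : IsLazy A) (hk : 1 ≤ k) (m : ℕ) :
    ForcedFrom A c₀ [] (runA A c₀ m) := by
  induction m with
  | zero => exact forcedFrom_nil A c₀ []
  | succ m IH =>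
      rw [runA_succ]
      apply forcedFrom_append A c₀ IH
      simpa using (blockA_spec A c₀ hA hlazy hk (runA A c₀ m)).2.2.2.1

lemma runA_prefix (m M : ℕ) (h : m ≤ M) :
    ∃ suf, runA A c₀ M = runA A c₀ m ++ suf := by
  induction M with
  | zero =>
      have : m = 0 := by omega
      subst this
      exact ⟨[], by simp⟩
  | succ M IH =>
      rcases Nat.lt_or_ge m (M + 1) with hlt | hge
      · obtain ⟨suf, hsuf⟩ := IH (by omega)
        exact ⟨suf ++ blockA A c₀ (runA A c₀ M), by
          rw [runA_succ, hsuf, List.append_assoc]⟩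
      · have : m = M + 1 := by omega
        subst this
        exact ⟨[], by simp⟩

lemma blockA_getElem_final (hA : IsOnline A) (hlazy : IsLazy A) (hk : 1 ≤ k)
    (L : List (Request (Fin k) (Fin (k + 1))))
    (hidx : 2 * k - 2 < (blockA A c₀ L).length) :
    (blockA A c₀ L)[2 * k - 2]'hidx =
      Request.specific (finalI (pairs A c₀ (k - 1) L).2) (hole (A c₀ L)) := by
  have hlen : (pairs A c₀ (k - 1) L).1.length = 2 * (k - 1) :=
    (pairs_spec A c₀ hA hlazy (k - 1) L).2.1
  have h2 : 2 * k - 2 = (pairs A c₀ (k - 1) L).1.length := by omega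
  have hb : blockA A c₀ L = (pairs A c₀ (k - 1) L).1 ++
      [Request.specific (finalI (pairs A c₀ (k - 1) L).2) (hole (A c₀ L))] := rfl
  simp [hb, List.getElem_append, h2]

/-- Position of the final request of block `m` in any extension of `runA (m+1)`. -/
lemma sigma_getElem_final (hA : IsOnline A) (hlazy : IsLazy A) (hk : 1 ≤ k)
    (m : ℕ) (T : List (Request (Fin k) (Fin (k + 1))))
    (hidx : (2 * k - 1) * m + (2 * k - 2) < (runA A c₀ (m + 1) ++ T).length) :
    (runA A c₀ (m + 1) ++ T)[(2 * k - 1) * m + (2 * k - 2)]'hidx =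
      Request.specific (iA A c₀ m) (hole (eA A c₀ m)) := by
  have hblen : (blockA A c₀ (runA A c₀ m)).length = 2 * k - 1 :=
    (blockA_spec A c₀ hA hlazy hk (runA A c₀ m)).2.1
  have hrlen := runA_length A c₀ hA hlazy hk m
  have h1 : (runA A c₀ (m + 1) ++ T) =
      runA A c₀ m ++ blockA A c₀ (runA A c₀ m) ++ T := by rw [runA_succ]
  have hi : 2 * k - 2 < (blockA A c₀ (runA A c₀ m)).length := by omega
  have hidx' : (runA A c₀ m).length + (2 * k - 2) <
      (runA A c₀ m ++ blockA A c₀ (runA A c₀ m) ++ T).length := by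
    simp only [List.length_append]
    omega
  have := getElem_middle (runA A c₀ m) (blockA A c₀ (runA A c₀ m)) T (2 * k - 2) hi hidx'
  rw [blockA_getElem_final A c₀ hA hlazy hk _ hi] at this
  have heq : (2 * k - 1) * m + (2 * k - 2) = (runA A c₀ m).length + (2 * k - 2) := by omega
  simp_rw [h1, heq]
  exact this

end RunSpec

end KServerPref
namespace KServerPref

section RunBSpec

variable {k : ℕ} [NeZero k] (A : Alg (Fin k) (Fin (k + 1))) (c₀ : Fin k → Fin (k + 1))

lemma runB_config (hA : IsOnline A) (hlazy : IsLazy A)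
    (base : List (Request (Fin k) (Fin (k + 1)))) (q : ℕ) :
    A c₀ (runB A c₀ base q) = A c₀ base := by
  induction q with
  | zero => rfl
  | succ q IH =>
      show A c₀ (runB A c₀ base q ++ _) = _
      set L := runB A c₀ base q with hL
      set E := A c₀ base with hE
      set z0 : Fin k := ⟨0, NeZero.pos k⟩ with hz0
      have hsplit : L ++ [Request.specific z0 (hole (A c₀ L)),
          Request.specific z0 (A c₀ L z0)] =
          (L ++ [Request.specific z0 (hole (A c₀ L))]) ++
            [Request.specific z0 (A c₀ L z0)] := by simp
      rw [hsplit]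
      have h1 : A c₀ L z0 ≠ hole (A c₀ L) := hole_spec (A c₀ L) z0
      have hc1 : A c₀ (L ++ [Request.specific z0 (hole (A c₀ L))]) =
          Function.update (A c₀ L) z0 (hole (A c₀ L)) :=
        step_specific A c₀ hA hlazy L z0 (hole (A c₀ L)) h1
      have h2 : A c₀ (L ++ [Request.specific z0 (hole (A c₀ L))]) z0 ≠ A c₀ L z0 := by
        rw [hc1, Function.update_self]
        exact fun hx => h1 hx.symm
      rw [step_specific A c₀ hA hlazy _ z0 (A c₀ L z0) h2, hc1,
        Function.update_idem, Function.update_eq_self, IH]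

lemma runB_succ (hA : IsOnline A) (hlazy : IsLazy A)
    (base : List (Request (Fin k) (Fin (k + 1)))) (q : ℕ) :
    runB A c₀ base (q + 1) = runB A c₀ base q ++
      [Request.specific ⟨0, NeZero.pos k⟩ (hole (A c₀ base)),
       Request.specific ⟨0, NeZero.pos k⟩ (A c₀ base ⟨0, NeZero.pos k⟩)] := by
  show runB A c₀ base q ++ _ = _
  rw [runB_config A c₀ hA hlazy base q]

lemma runB_length (base : List (Request (Fin k) (Fin (k + 1)))) (q : ℕ) :
    (runB A c₀ base q).length = base.length + 2 * q := by
  induction q with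
  | zero => rfl
  | succ q IH =>
      show (runB A c₀ base q ++ _).length = _
      rw [List.length_append, IH]
      simp
      omega

lemma runB_countP (base : List (Request (Fin k) (Fin (k + 1)))) (q : ℕ) :
    (runB A c₀ base q).countP Request.isSpec = base.countP Request.isSpec + 2 * q := by
  induction q with
  | zero => rfl
  | succ q IH =>
      show (runB A c₀ base q ++ _).countP _ = _
      rw [List.countP_append, IH]
      simp [Request.isSpec, List.countP_cons]
      omega

lemma runB_forced (hA : IsOnline A) (hlazy : IsLazy A)
    (base : List (Request (Fin k) (Fin (k + 1)))) (q : ℕ)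
    (hbase : ForcedFrom A c₀ [] base) :
    ForcedFrom A c₀ [] (runB A c₀ base q) := by
  induction q with
  | zero => exact hbase
  | succ q IH =>
      show ForcedFrom A c₀ [] (runB A c₀ base q ++ _)
      apply forcedFrom_append A c₀ IH
      set L := runB A c₀ base q with hL
      set z0 : Fin k := ⟨0, NeZero.pos k⟩ with hz0
      have h1 : A c₀ L z0 ≠ hole (A c₀ L) := hole_spec (A c₀ L) z0
      have f1 : ForcedFrom A c₀ L [Request.specific z0 (hole (A c₀ L))] :=
        forcedFrom_single A c₀ L _ h1
      have hc1 : A c₀ (L ++ [Request.specific z0 (hole (A c₀ L))]) =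
          Function.update (A c₀ L) z0 (hole (A c₀ L)) :=
        step_specific A c₀ hA hlazy L z0 (hole (A c₀ L)) h1
      have f2 : ForcedFrom A c₀ (L ++ [Request.specific z0 (hole (A c₀ L))])
          [Request.specific z0 (A c₀ L z0)] := by
        apply forcedFrom_single
        intro hs
        have : A c₀ (L ++ [Request.specific z0 (hole (A c₀ L))]) z0 = A c₀ L z0 := hs
        rw [hc1, Function.update_self] at this
        exact h1 this.symm
      have := forcedFrom_append A c₀ f1 f2
      simpa using this

lemma runB_prefix (base : List (Request (Fin k) (Fin (k + 1)))) (q Q : ℕ) (h : q ≤ Q) :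
    ∃ suf, runB A c₀ base Q = runB A c₀ base q ++ suf := by
  induction Q with
  | zero =>
      have : q = 0 := by omega
      subst this
      exact ⟨[], by simp⟩
  | succ Q IH =>
      rcases Nat.lt_or_ge q (Q + 1) with hlt | hge
      · obtain ⟨suf, hsuf⟩ := IH (by omega)
        refine ⟨suf ++ [Request.specific ⟨0, NeZero.pos k⟩ (hole (A c₀ (runB A c₀ base Q))),
          Request.specific ⟨0, NeZero.pos k⟩ (A c₀ (runB A c₀ base Q) ⟨0, NeZero.pos k⟩)], ?_⟩
        show runB A c₀ base Q ++ _ = _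
        rw [hsuf, List.append_assoc]
      · have : q = Q + 1 := by omega
        subst this
        exact ⟨[], by simp⟩

lemma runB_getElem (hA : IsOnline A) (hlazy : IsLazy A)
    (base : List (Request (Fin k) (Fin (k + 1)))) (q u : ℕ) (hu : u < q)
    (h1 : base.length + 2 * u < (runB A c₀ base q).length)
    (h2 : base.length + 2 * u + 1 < (runB A c₀ base q).length) :
    (runB A c₀ base q)[base.length + 2 * u]'h1 =
      Request.specific ⟨0, NeZero.pos k⟩ (hole (A c₀ base)) ∧
    (runB A c₀ base q)[base.length + 2 * u + 1]'h2 =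
      Request.specific ⟨0, NeZero.pos k⟩ (A c₀ base ⟨0, NeZero.pos k⟩) := by
  obtain ⟨suf, hsuf⟩ := runB_prefix A c₀ base (u + 1) q hu
  have hsplit : runB A c₀ base q = runB A c₀ base u ++
      [Request.specific ⟨0, NeZero.pos k⟩ (hole (A c₀ base)),
       Request.specific ⟨0, NeZero.pos k⟩ (A c₀ base ⟨0, NeZero.pos k⟩)] ++ suf := by
    rw [hsuf, runB_succ A c₀ hA hlazy]
  have hlen : (runB A c₀ base u).length = base.length + 2 * u :=
    runB_length A c₀ base u
  set pairL : List (Request (Fin k) (Fin (k + 1))) :=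
    [Request.specific ⟨0, NeZero.pos k⟩ (hole (A c₀ base)),
     Request.specific ⟨0, NeZero.pos k⟩ (A c₀ base ⟨0, NeZero.pos k⟩)] with hpairL
  constructor
  · have hidx : (runB A c₀ base u).length + 0 < (runB A c₀ base q).length := by omega
    have := getElem_middle (runB A c₀ base u) pairL suf 0 (by norm_num [hpairL])
      (by rw [← hsplit] at *; exact hidx)
    simp only [← hsplit] at this
    convert this using 2
    · omega
    · simp [hpairL]
  · have hidx : (runB A c₀ base u).length + 1 < (runB A c₀ base q).length := by omega
    have := getElem_middle (runB A c₀ base u) pairL suf 1 (by norm_num [hpairL])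
      (by rw [← hsplit] at *; exact hidx)
    simp only [← hsplit] at this
    convert this using 2
    · omega
    · simp [hpairL]

end RunBSpec

end KServerPref
namespace KServerPref

section Offline

variable {k : ℕ} [NeZero k]

/-- Total cost of moving through the list of segment configurations. -/
noncomputable def transCost : (Fin k → Fin (k + 1)) →
    List (List (Request (Fin k) (Fin (k + 1))) × (Fin k → Fin (k + 1))) → ℝ
  | _, [] => 0
  | c, s :: rest => configCost unif c s.2 + transCost s.2 rest

lemma exists_offline :
    ∀ (segs : List (List (Request (Fin k) (Fin (k + 1))) × (Fin k → Fin (k + 1))))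
      (c : Fin k → Fin (k + 1)),
      (∀ s ∈ segs, ∀ r ∈ s.1, Serves s.2 r) →
      (∀ s ∈ segs, s.1 ≠ []) →
      ∃ os, ServesSeq c ((segs.map Prod.fst).flatten) os ∧
        offlineCost unif ((segs.map Prod.fst).flatten) os ≤ transCost c segs := by
  intro segs
  induction segs with
  | nil =>
      intro c _ _
      refine ⟨fun _ => c, ⟨rfl, ?_⟩, ?_⟩
      · intro i
        exact absurd i.2 (by simp)
      · simp [offlineCost, transCost]
  | cons s rest IH =>
      intro c hserve hne
      obtain ⟨l, dcfg⟩ := s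
      obtain ⟨os', hss', hcost'⟩ := IH dcfg
        (fun s hs => hserve s (List.mem_cons_of_mem _ hs))
        (fun s hs => hne s (List.mem_cons_of_mem _ hs))
      set σ' := ((rest.map Prod.fst).flatten) with hσ'
      have hL : 0 < l.length := by
        have := hne (l, dcfg) (List.mem_cons_self)
        exact List.length_pos_iff.2 this
      set os : ℕ → Fin k → Fin (k + 1) := fun i =>
        if i = 0 then c else if i ≤ l.length then dcfg else os' (i - l.length) with hos
      have hflat : (((l, dcfg) :: rest).map Prod.fst).flatten = l ++ σ' := by simp [hσ']
      have hos0 : os 0 = c := by simp [hos]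
      have hosMid : ∀ i, 1 ≤ i → i ≤ l.length → os i = dcfg := by
        intro i h1 h2
        simp only [hos]
        rw [if_neg (by omega), if_pos h2]
      have hosHigh : ∀ i, l.length < i → os i = os' (i - l.length) := by
        intro i h1
        simp only [hos]
        rw [if_neg (by omega), if_neg (by omega)]
      refine ⟨os, ⟨hos0, ?_⟩, ?_⟩
      · rw [hflat]
        intro i
        have hi := i.2
        simp only [List.length_append] at hi
        by_cases hc : i.1 < l.length
        · have hget : (l ++ σ').get i = l[i.1]'hc := by
            simp [List.getElem_append_left hc]
          rw [hget, hosMid (i.1 + 1) (by omega) (by omega)]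
          exact hserve (l, dcfg) (List.mem_cons_self) _ (l.getElem_mem hc)
        · push_neg at hc
          have hi' : i.1 - l.length < σ'.length := by omega
          have hget : (l ++ σ').get i = σ'[i.1 - l.length]'hi' := by
            simp [List.getElem_append_right hc]
          rw [hget]
          have := hss'.2 ⟨i.1 - l.length, hi'⟩
          have harith : i.1 + 1 - l.length = (i.1 - l.length) + 1 := by omega
          rw [hosHigh (i.1 + 1) (by omega), harith]
          exact this
      · rw [hflat]
        show (∑ i ∈ Finset.range (l ++ σ').length, _) ≤ _
        simp only [List.length_append]
        rw [Finset.sum_range_add]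
        have hfirst : ∑ i ∈ Finset.range l.length,
            configCost unif (os i) (os (i + 1)) = configCost unif c dcfg := by
          have hterm : ∀ i ∈ Finset.range l.length,
              configCost unif (os i) (os (i + 1)) =
                if i = 0 then configCost unif c dcfg else 0 := by
            intro i hi
            simp only [Finset.mem_range] at hi
            by_cases h0 : i = 0
            · subst h0
              rw [hos0, hosMid 1 le_rfl (by omega), if_pos rfl]
            · rw [hosMid i (by omega) (by omega), hosMid (i + 1) (by omega) (by omega),
                if_neg h0]
              exact configCost_self dcfg
          rw [Finset.sum_congr rfl hterm, Finset.sum_ite_eq' (Finset.range l.length) 0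
            (fun _ => configCost unif c dcfg)]
          rw [if_pos (Finset.mem_range.2 hL)]
        have hsecond : ∀ i ∈ Finset.range σ'.length,
            configCost unif (os (l.length + i)) (os (l.length + i + 1)) =
              configCost unif (os' i) (os' (i + 1)) := by
          intro i hi
          by_cases h0 : i = 0
          · subst h0
            simp only [Nat.add_zero]
            rw [hosMid l.length (by omega) le_rfl, hosHigh (l.length + 1) (by omega)]
            have e1 : l.length + 1 - l.length = 1 := by omega
            rw [e1, hss'.1]
          · rw [hosHigh (l.length + i) (by omega), hosHigh (l.length + i + 1) (by omega)]
            have e1 : l.length + i - l.length = i := by omega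
            have e2 : l.length + i + 1 - l.length = i + 1 := by omega
            rw [e1, e2]
        rw [hfirst, Finset.sum_congr rfl hsecond]
        have : (∑ i ∈ Finset.range σ'.length, configCost unif (os' i) (os' (i + 1))) =
            offlineCost unif σ' os' := rfl
        rw [this]
        show _ ≤ transCost c ((l, dcfg) :: rest)
        show _ ≤ configCost unif c dcfg + transCost dcfg rest
        linarith

end Offline

end KServerPref
namespace KServerPref

section CostCalc

variable {k : ℕ} [NeZero k] (A : Alg (Fin k) (Fin (k + 1))) (c₀ : Fin k → Fin (k + 1))

/-- The algorithm pays exactly 1 per request when all requests force a move. -/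
lemma algCost_of_forced (hA : IsOnline A) (hlazy : IsLazy A)
    (σ : List (Request (Fin k) (Fin (k + 1)))) (h : ForcedFrom A c₀ [] σ) :
    algCost unif A c₀ σ = σ.length := by
  unfold algCost
  rw [Finset.sum_congr rfl (fun i hi => ?_), Finset.sum_const, Finset.card_range,
    nsmul_eq_mul, mul_one]
  simp only [Finset.mem_range] at hi
  have htake : σ.take (i + 1) = σ.take i ++ [σ.get ⟨i, hi⟩] := by
    rw [List.take_succ]
    simp [List.getElem?_eq_getElem hi]
  have hf := h i hi
  rw [List.nil_append] at hf
  rw [htake]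
  exact step_cost A c₀ hA hlazy _ _ hf

/-- Type-A segments. -/
noncomputable def segsA (m0 len : ℕ) :
    List (List (Request (Fin k) (Fin (k + 1))) × (Fin k → Fin (k + 1))) :=
  (List.range' m0 len).map (fun m => (blockA A c₀ (runA A c₀ m), eA A c₀ (m + 1)))

/-- Type-B segments. -/
noncomputable def segsB (E : Fin k → Fin (k + 1)) (q : ℕ) :
    List (List (Request (Fin k) (Fin (k + 1))) × (Fin k → Fin (k + 1))) :=
  (List.replicate q
    [([Request.specific ⟨0, NeZero.pos k⟩ (hole E)],
        Function.update E ⟨0, NeZero.pos k⟩ (hole E)),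
     ([Request.specific ⟨0, NeZero.pos k⟩ (E ⟨0, NeZero.pos k⟩)], E)]).flatten

lemma segsA_flatten (mA : ℕ) :
    (((segsA A c₀ 0 mA).map Prod.fst)).flatten = runA A c₀ mA := by
  induction mA with
  | zero => rfl
  | succ m IH =>
      rw [segsA, List.range'_concat, runA_succ]
      simp only [List.map_append, List.flatten_append]
      rw [← segsA, IH]
      simp

lemma segsB_flatten (hA : IsOnline A) (hlazy : IsLazy A)
    (base : List (Request (Fin k) (Fin (k + 1)))) (q : ℕ) :
    base ++ ((segsB (A c₀ base) q).map Prod.fst).flatten = runB A c₀ base q := by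
  induction q with
  | zero => simp [segsB, runB]
  | succ q IH =>
      rw [segsB, List.replicate_succ', List.flatten_append, runB_succ A c₀ hA hlazy]
      simp only [List.map_append, List.flatten_append]
      rw [← segsB, ← List.append_assoc, IH]
      simp

lemma segsA_serves (hA : IsOnline A) (hlazy : IsLazy A) (hk : 1 ≤ k) (m0 len : ℕ) :
    (∀ s ∈ segsA A c₀ m0 len, ∀ r ∈ s.1, Serves s.2 r) ∧
    (∀ s ∈ segsA A c₀ m0 len, s.1 ≠ []) := by
  constructor
  · rintro s hs r hr
    simp only [segsA, List.mem_map] at hs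
    obtain ⟨m, _, rfl⟩ := hs
    simp only
    rw [eA_succ A c₀ hA hlazy hk]
    exact (blockA_spec A c₀ hA hlazy hk (runA A c₀ m)).2.2.2.2 r hr
  · rintro s hs
    simp only [segsA, List.mem_map] at hs
    obtain ⟨m, _, rfl⟩ := hs
    simp only [blockA]
    intro hx
    exact absurd (congrArg List.length hx) (by simp)

lemma segsB_serves (E : Fin k → Fin (k + 1)) (q : ℕ) :
    (∀ s ∈ segsB E q, ∀ r ∈ s.1, Serves s.2 r) ∧
    (∀ s ∈ segsB E q, s.1 ≠ []) := by
  constructor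
  · rintro s hs r hr
    rw [segsB, List.mem_flatten] at hs
    obtain ⟨l, hlmem, hsl⟩ := hs
    rw [List.mem_replicate] at hlmem
    rw [hlmem.2] at hsl
    rcases List.mem_cons.1 hsl with rfl | hsl'
    · rw [List.mem_singleton] at hr
      subst hr
      show Function.update E ⟨0, NeZero.pos k⟩ (hole E) ⟨0, NeZero.pos k⟩ = hole E
      exact Function.update_self _ _ _
    rcases List.mem_cons.1 hsl' with rfl | hsl''
    · rw [List.mem_singleton] at hr
      subst hr
      rfl
    · exact absurd hsl'' (List.not_mem_nil)
  · rintro s hs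
    rw [segsB, List.mem_flatten] at hs
    obtain ⟨l, hlmem, hsl⟩ := hs
    rw [List.mem_replicate] at hlmem
    rw [hlmem.2] at hsl
    rcases List.mem_cons.1 hsl with rfl | hsl'
    · simp
    rcases List.mem_cons.1 hsl' with rfl | hsl''
    · simp
    · exact absurd hsl'' (List.not_mem_nil)

/-- End configuration after a list of segments. -/
noncomputable def endCfg : (Fin k → Fin (k + 1)) →
    List (List (Request (Fin k) (Fin (k + 1))) × (Fin k → Fin (k + 1))) →
      (Fin k → Fin (k + 1))
  | c, [] => c
  | _, s :: rest => endCfg s.2 rest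

lemma transCost_append (c : Fin k → Fin (k + 1)) (s1 s2 :
    List (List (Request (Fin k) (Fin (k + 1))) × (Fin k → Fin (k + 1)))) :
    transCost c (s1 ++ s2) = transCost c s1 + transCost (endCfg c s1) s2 := by
  induction s1 generalizing c with
  | nil => simp [transCost, endCfg]
  | cons s rest IH =>
      simp only [List.cons_append, transCost, endCfg, List.append_eq]
      rw [IH s.2]
      ring

lemma segsA_trans (hA : IsOnline A) (hlazy : IsLazy A) (hk : 1 ≤ k) (len : ℕ) :
    ∀ m0, transCost (eA A c₀ m0) (segsA A c₀ m0 len) = len ∧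
      endCfg (eA A c₀ m0) (segsA A c₀ m0 len) = eA A c₀ (m0 + len) := by
  induction len with
  | zero => intro m0; exact ⟨by simp [segsA, transCost], rfl⟩
  | succ len IH =>
      intro m0
      have hdef : segsA A c₀ m0 (len + 1) =
          (blockA A c₀ (runA A c₀ m0), eA A c₀ (m0 + 1)) :: segsA A c₀ (m0 + 1) len := by
        rw [segsA, List.range'_succ]
        simp [segsA]
      have hcc : configCost unif (eA A c₀ m0) (eA A c₀ (m0 + 1)) = 1 := by
        rw [eA_succ A c₀ hA hlazy hk]
        exact configCost_update _ _ _ (hole_spec (eA A c₀ m0) (iA A c₀ m0))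
      obtain ⟨IH1, IH2⟩ := IH (m0 + 1)
      constructor
      · rw [hdef]
        show configCost unif (eA A c₀ m0) (eA A c₀ (m0 + 1)) +
          transCost (eA A c₀ (m0 + 1)) (segsA A c₀ (m0 + 1) len) = _
        rw [hcc, IH1]
        push_cast
        ring
      · rw [hdef]
        show endCfg (eA A c₀ (m0 + 1)) (segsA A c₀ (m0 + 1) len) = _
        rw [IH2]
        have harith : m0 + 1 + len = m0 + (len + 1) := by omega
        rw [harith]

lemma segsB_trans (E : Fin k → Fin (k + 1)) (q : ℕ) :
    transCost E (segsB E q) = 2 * q ∧ endCfg E (segsB E q) = E := by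
  induction q with
  | zero => exact ⟨by simp [segsB, transCost], rfl⟩
  | succ q IH =>
      have hdef : segsB E (q + 1) =
          ([Request.specific ⟨0, NeZero.pos k⟩ (hole E)],
            Function.update E ⟨0, NeZero.pos k⟩ (hole E)) ::
          ([Request.specific ⟨0, NeZero.pos k⟩ (E ⟨0, NeZero.pos k⟩)], E) ::
            segsB E q := by
        rw [segsB, List.replicate_succ]
        simp [segsB]
      set z0 : Fin k := ⟨0, NeZero.pos k⟩
      have h1 : configCost unif E (Function.update E z0 (hole E)) = 1 :=
        configCost_update _ _ _ (hole_spec E z0)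
      have h2 : configCost unif (Function.update E z0 (hole E)) E = 1 := by
        have hreq : Function.update (Function.update E z0 (hole E)) z0 (E z0) = E := by
          rw [Function.update_idem, Function.update_eq_self]
        calc configCost unif (Function.update E z0 (hole E)) E
            = configCost unif (Function.update E z0 (hole E))
                (Function.update (Function.update E z0 (hole E)) z0 (E z0)) := by rw [hreq]
          _ = 1 := configCost_update _ _ _ (by
              rw [Function.update_self]
              exact fun hx => hole_spec E z0 hx.symm)
      rw [hdef]
      constructor
      · show configCost unif E (Function.update E z0 (hole E)) +
          (configCost unif (Function.update E z0 (hole E)) E + transCost E (segsB E q)) = _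
        rw [h1, h2, IH.1]
        push_cast
        ring
      · show endCfg E (segsB E q) = E
        exact IH.2

end CostCalc

end KServerPref
namespace KServerPref

section Bounds

variable {k : ℕ} [NeZero k] (A : Alg (Fin k) (Fin (k + 1))) (c₀ : Fin k → Fin (k + 1))

lemma offlineCost_nonneg (σ : List (Request (Fin k) (Fin (k + 1))))
    (os : ℕ → Fin k → Fin (k + 1)) : 0 ≤ offlineCost unif σ os :=
  Finset.sum_nonneg fun _ _ => configCost_nonneg _ _

lemma opt_le (σ : List (Request (Fin k) (Fin (k + 1)))) (os : ℕ → Fin k → Fin (k + 1))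
    (h1 : ServesSeq c₀ σ os) : OPT unif c₀ σ ≤ offlineCost unif σ os := by
  apply csInf_le
  · exact ⟨0, by rintro x ⟨os', _, rfl⟩; exact offlineCost_nonneg _ os'⟩
  · exact ⟨os, h1, rfl⟩

lemma le_opt (σ : List (Request (Fin k) (Fin (k + 1)))) (B : ℝ)
    (hne : ∃ os, ServesSeq c₀ σ os)
    (h : ∀ os, ServesSeq c₀ σ os → B ≤ offlineCost unif σ os) :
    B ≤ OPT unif c₀ σ := by
  obtain ⟨os₀, hos₀⟩ := hne
  refine le_csInf ⟨offlineCost unif σ os₀, ⟨os₀, hos₀, rfl⟩⟩ ?_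
  rintro x ⟨os, hos, rfl⟩
  exact h os hos

/-- The explicit offline strategy: cost `mA + 2 mB`. -/
lemma opt_upper (hA : IsOnline A) (hlazy : IsLazy A) (hk : 1 ≤ k) (mA mB : ℕ) :
    (∃ os, ServesSeq c₀ (runB A c₀ (runA A c₀ mA) mB) os) ∧
    OPT unif c₀ (runB A c₀ (runA A c₀ mA) mB) ≤ (mA : ℝ) + 2 * mB := by
  set σ := runB A c₀ (runA A c₀ mA) mB with hσ
  set segs := segsA A c₀ 0 mA ++ segsB (eA A c₀ mA) mB with hsegs
  have hflat : ((segs.map Prod.fst)).flatten = σ := by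
    rw [hsegs, List.map_append, List.flatten_append, segsA_flatten]
    have : eA A c₀ mA = A c₀ (runA A c₀ mA) := rfl
    rw [this]
    exact segsB_flatten A c₀ hA hlazy (runA A c₀ mA) mB
  have hserve : ∀ s ∈ segs, ∀ r ∈ s.1, Serves s.2 r := by
    intro s hs
    rcases List.mem_append.1 hs with h | h
    · exact (segsA_serves A c₀ hA hlazy hk 0 mA).1 s h
    · exact (segsB_serves (eA A c₀ mA) mB).1 s h
  have hne : ∀ s ∈ segs, s.1 ≠ [] := by
    intro s hs
    rcases List.mem_append.1 hs with h | h
    · exact (segsA_serves A c₀ hA hlazy hk 0 mA).2 s h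
    · exact (segsB_serves (eA A c₀ mA) mB).2 s h
  obtain ⟨os, hss, hcost⟩ := exists_offline segs c₀ hserve hne
  rw [hflat] at hss hcost
  have htrans : transCost c₀ segs = (mA : ℝ) + 2 * mB := by
    have t1 := (segsA_trans A c₀ hA hlazy hk mA 0).1
    have t2 := (segsA_trans A c₀ hA hlazy hk mA 0).2
    rw [eA_zero A c₀ hA] at t1 t2
    have hz : (0 : ℕ) + mA = mA := by omega
    rw [hz] at t2
    rw [hsegs, transCost_append, t1, t2, (segsB_trans (eA A c₀ mA) mB).1]
  exact ⟨⟨os, hss⟩, le_trans (opt_le c₀ σ os hss) (by rw [← htrans]; exact hcost)⟩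

/-- Lower bound certificate from type-B pairs. -/
lemma certB (hA : IsOnline A) (hlazy : IsLazy A) (mA mB : ℕ)
    (os : ℕ → Fin k → Fin (k + 1))
    (hos : ServesSeq c₀ (runB A c₀ (runA A c₀ mA) mB) os) :
    (mB : ℝ) ≤ offlineCost unif (runB A c₀ (runA A c₀ mA) mB) os := by
  set base := runA A c₀ mA with hbase
  set σ := runB A c₀ base mB with hσ
  set E := A c₀ base with hE
  set z0 : Fin k := ⟨0, NeZero.pos k⟩ with hz0
  set nA := base.length with hnA
  have hlen : σ.length = nA + 2 * mB := runB_length A c₀ base mB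
  set f : ℕ → ℝ := fun i => configCost unif (os i) (os (i + 1)) with hf
  have hkey : ∀ q < mB, (1 : ℝ) ≤ f (nA + 2 * q + 1) := by
    intro q hq
    have h1 : nA + 2 * q < σ.length := by omega
    have h2 : nA + 2 * q + 1 < σ.length := by omega
    obtain ⟨hg1, hg2⟩ := runB_getElem A c₀ hA hlazy base mB q hq h1 h2
    have hs1 := hos.2 ⟨nA + 2 * q, h1⟩
    have hs2 := hos.2 ⟨nA + 2 * q + 1, h2⟩
    simp only [List.get_eq_getElem] at hs1 hs2
    rw [hg1] at hs1
    rw [hg2] at hs2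
    have e1 : os (nA + 2 * q + 1) z0 = hole E := hs1
    have e2 : os (nA + 2 * q + 1 + 1) z0 = E z0 := hs2
    have := configCost_ge_point (os (nA + 2 * q + 1)) (os (nA + 2 * q + 1 + 1)) z0
    rw [e1, e2, unif_eq_one (fun hx => hole_spec E z0 hx.symm)] at this
    exact this
  have himg : (Finset.range mB).image (fun q => nA + 2 * q + 1) ⊆
      Finset.range σ.length := by
    intro x hx
    simp only [Finset.mem_image, Finset.mem_range] at hx ⊢
    obtain ⟨q, hq, rfl⟩ := hx
    omega
  have hmono : ∑ i ∈ (Finset.range mB).image (fun q => nA + 2 * q + 1), f i ≤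
      ∑ i ∈ Finset.range σ.length, f i :=
    Finset.sum_le_sum_of_subset_of_nonneg himg
      (fun i _ _ => configCost_nonneg _ _)
  have hinj : Set.InjOn (fun q => nA + 2 * q + 1) (Finset.range mB) := by
    intro x _ y _ hxy
    simp only at hxy
    omega
  rw [Finset.sum_image hinj] at hmono
  have : (mB : ℝ) ≤ ∑ q ∈ Finset.range mB, f (nA + 2 * q + 1) := by
    calc (mB : ℝ) = ∑ _q ∈ Finset.range mB, (1 : ℝ) := by simp
    _ ≤ _ := Finset.sum_le_sum (fun q hq => hkey q (Finset.mem_range.1 hq))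
  exact le_trans this hmono

lemma os_const_of {α : Type} (os : ℕ → α) (a b : ℕ)
    (h : ∀ i, a ≤ i → i < b → os i = os (i + 1)) :
    ∀ j, a ≤ j → j ≤ b → os a = os j := by
  intro j
  induction j with
  | zero =>
      intro hj1 _
      have : a = 0 := by omega
      subst this
      rfl
  | succ j IH =>
      intro hj1 hj2
      by_cases hc : a ≤ j
      · exact (IH hc (by omega)).trans (h j hc (by omega))
      · have : a = j + 1 := by omega
        subst this
        rfl

lemma eA_const (hA : IsOnline A) (hlazy : IsLazy A) (hk : 1 ≤ k) (i : Fin k) :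
    ∀ (t m : ℕ), m ≤ t → (∀ s, m ≤ s → s < t → iA A c₀ s ≠ i) →
      eA A c₀ t i = eA A c₀ m i := by
  intro t
  induction t with
  | zero =>
      intro m hm _
      have : m = 0 := by omega
      subst this; rfl
  | succ t IH =>
      intro m hm hno
      by_cases hc : m ≤ t
      · rw [eA_succ A c₀ hA hlazy hk t,
          Function.update_of_ne (Ne.symm (hno t hc (by omega)))]
        exact IH m hc (fun s h1 h2 => hno s h1 (by omega))
      · have : m = t + 1 := by omega
        subst this; rfl

end Bounds

end KServerPref
namespace KServerPref

section CertA

variable {k : ℕ} [NeZero k] (A : Alg (Fin k) (Fin (k + 1))) (c₀ : Fin k → Fin (k + 1))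

lemma certA_window (hA : IsOnline A) (hlazy : IsLazy A) (hk : 1 ≤ k) (mA : ℕ)
    (os : ℕ → Fin k → Fin (k + 1)) (hos : ServesSeq c₀ (runA A c₀ mA) os)
    (m : ℕ) (hm : m + k + 1 ≤ mA) :
    (1 : ℝ) ≤ ∑ i ∈ Finset.Ico ((2 * k - 1) * m + (2 * k - 2) + 1)
        ((2 * k - 1) * (m + k) + (2 * k - 2) + 1),
      configCost unif (os i) (os (i + 1)) := by
  set σ := runA A c₀ mA with hσ
  have hn : σ.length = (2 * k - 1) * mA := runA_length A c₀ hA hlazy hk mA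
  set E : ℕ → ℕ := fun m' => (2 * k - 1) * m' + (2 * k - 2) with hEdef
  have hEmono : ∀ {x y : ℕ}, x ≤ y → E x ≤ E y := by
    intro x y hxy
    simp only [hEdef]
    exact Nat.add_le_add_right (Nat.mul_le_mul_left _ hxy) _
  have hEn : ∀ r, r ≤ k → E (m + r) < σ.length := by
    intro r hr
    rw [hn]
    have h1 : (2 * k - 1) * (m + r + 1) ≤ (2 * k - 1) * mA :=
      Nat.mul_le_mul_left _ (by omega)
    have h2 : (2 * k - 1) * (m + r + 1) = (2 * k - 1) * (m + r) + (2 * k - 1) :=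
      Nat.mul_succ _ _
    simp only [hEdef]
    omega
  have hserve : ∀ r, r ≤ k →
      os (E (m + r) + 1) (iA A c₀ (m + r)) = hole (eA A c₀ (m + r)) := by
    intro r hr
    have hidx : E (m + r) < σ.length := hEn r hr
    obtain ⟨suf, hsuf⟩ := runA_prefix A c₀ (m + r + 1) mA (by omega)
    have hidx2 : E (m + r) < (runA A c₀ (m + r + 1) ++ suf).length := by
      rw [← hsuf]; exact hidx
    have hget : σ[E (m + r)]'hidx = (runA A c₀ (m + r + 1) ++ suf)[E (m + r)]'hidx2 :=
      List.getElem_of_eq hsuf hidx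
    have hfin := sigma_getElem_final A c₀ hA hlazy hk (m + r) suf hidx2
    have hs := hos.2 ⟨E (m + r), hidx⟩
    simp only [List.get_eq_getElem] at hs
    rw [hget, hfin] at hs
    exact hs
  by_contra hlt
  push_neg at hlt
  have hteq : ∀ i, E m + 1 ≤ i → i < E (m + k) + 1 → os i = os (i + 1) := by
    intro i h1 h2
    apply eq_of_configCost_lt_one
    calc configCost unif (os i) (os (i + 1))
        ≤ ∑ i ∈ Finset.Ico (E m + 1) (E (m + k) + 1),
            configCost unif (os i) (os (i + 1)) :=
          Finset.single_le_sum (f := fun j => configCost unif (os j) (os (j + 1)))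
            (fun j _ => configCost_nonneg _ _) (Finset.mem_Ico.2 ⟨h1, h2⟩)
      _ < 1 := hlt
  have hconst := os_const_of os (E m + 1) (E (m + k) + 1) hteq
  have hg : ∀ r, r ≤ k →
      os (E m + 1) (iA A c₀ (m + r)) = hole (eA A c₀ (m + r)) := by
    intro r hr
    rw [hconst (E (m + r) + 1) (by have := hEmono (Nat.le_add_right m r); omega)
      (by have := hEmono (Nat.add_le_add_left hr m); omega)]
    exact hserve r hr
  obtain ⟨r, r', hne, heq⟩ := Fintype.exists_ne_map_eq_of_card_lt
    (fun r : Fin (k + 1) => iA A c₀ (m + r.1)) (by simp)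
  set i : Fin k := iA A c₀ (m + r.1) with hi
  set T : Finset ℕ := (Finset.range (k + 1)).filter (fun t => iA A c₀ (m + t) = i)
    with hT
  have hrT : r.1 ∈ T := by
    rw [hT, Finset.mem_filter]
    exact ⟨Finset.mem_range.2 r.2, rfl⟩
  have hr'T : r'.1 ∈ T := by
    rw [hT, Finset.mem_filter]
    exact ⟨Finset.mem_range.2 r'.2, heq.symm⟩
  have hvne : r.1 ≠ r'.1 := fun h => hne (Fin.ext h)
  have hTne : T.Nonempty := ⟨r.1, hrT⟩
  set r1 := T.min' hTne with hr1
  have hr1T : r1 ∈ T := T.min'_mem hTne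
  have hT'ne : (T.erase r1).Nonempty := by
    by_cases hc : r.1 = r1
    · exact ⟨r'.1, Finset.mem_erase.2 ⟨by omega, hr'T⟩⟩
    · exact ⟨r.1, Finset.mem_erase.2 ⟨hc, hrT⟩⟩
  set r2 := (T.erase r1).min' hT'ne with hr2
  have hr2T' : r2 ∈ T.erase r1 := (T.erase r1).min'_mem hT'ne
  have hr2T : r2 ∈ T := Finset.mem_of_mem_erase hr2T'
  have hr2ne : r2 ≠ r1 := Finset.ne_of_mem_erase hr2T'
  have hr1le : r1 ≤ r2 := T.min'_le r2 hr2T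
  have hr1lt : r1 < r2 := lt_of_le_of_ne hr1le (Ne.symm hr2ne)
  have hr2k : r2 ≤ k := by
    have := (Finset.mem_filter.1 hr2T).1
    rw [Finset.mem_range] at this
    omega
  have hr1k : r1 ≤ k := by omega
  have hiA1 : iA A c₀ (m + r1) = i := (Finset.mem_filter.1 hr1T).2
  have hiA2 : iA A c₀ (m + r2) = i := (Finset.mem_filter.1 hr2T).2
  have hgap : ∀ s, r1 < s → s < r2 → iA A c₀ (m + s) ≠ i := by
    intro s h1 h2 hiAs
    have hsT : s ∈ T := by
      rw [hT, Finset.mem_filter]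
      exact ⟨Finset.mem_range.2 (by omega), hiAs⟩
    have hsT' : s ∈ T.erase r1 := Finset.mem_erase.2 ⟨by omega, hsT⟩
    have := (T.erase r1).min'_le s hsT'
    omega
  have heAc : eA A c₀ (m + r2) i = eA A c₀ (m + r1 + 1) i := by
    apply eA_const A c₀ hA hlazy hk i (m + r2) (m + r1 + 1) (by omega)
    intro s h1 h2
    have h3 := hgap (s - m) (by omega) (by omega)
    have hsm : m + (s - m) = s := by omega
    rw [hsm] at h3
    exact h3
  have hstep : eA A c₀ (m + r1 + 1) i = hole (eA A c₀ (m + r1)) := by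
    rw [eA_succ A c₀ hA hlazy hk (m + r1), hiA1]
    exact Function.update_self _ _ _
  have hg1 : os (E m + 1) i = hole (eA A c₀ (m + r1)) := by
    have := hg r1 hr1k
    rwa [hiA1] at this
  have hg2 : os (E m + 1) i = hole (eA A c₀ (m + r2)) := by
    have := hg r2 hr2k
    rwa [hiA2] at this
  have : eA A c₀ (m + r2) i = hole (eA A c₀ (m + r2)) := by
    rw [heAc, hstep, ← hg1, hg2]
  exact hole_spec (eA A c₀ (m + r2)) i this

lemma certA (hA : IsOnline A) (hlazy : IsLazy A) (hk : 1 ≤ k) (mA Q : ℕ)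
    (hQ : Q * k + k + 1 ≤ mA)
    (os : ℕ → Fin k → Fin (k + 1)) (hos : ServesSeq c₀ (runA A c₀ mA) os) :
    (Q : ℝ) ≤ offlineCost unif (runA A c₀ mA) os := by
  set σ := runA A c₀ mA with hσ
  have hn : σ.length = (2 * k - 1) * mA := runA_length A c₀ hA hlazy hk mA
  set E : ℕ → ℕ := fun m' => (2 * k - 1) * m' + (2 * k - 2) with hEdef
  set f : ℕ → ℝ := fun i => configCost unif (os i) (os (i + 1)) with hf
  have hEmono : ∀ {x y : ℕ}, x ≤ y → E x ≤ E y := by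
    intro x y hxy
    simp only [hEdef]
    exact Nat.add_le_add_right (Nat.mul_le_mul_left _ hxy) _
  have hchunk : ∀ q, q ≤ Q →
      (q : ℝ) ≤ ∑ i ∈ Finset.Ico (E 0 + 1) (E (q * k) + 1), f i := by
    intro q
    induction q with
    | zero =>
        intro _
        simp only [Nat.cast_zero, Nat.zero_mul]
        rw [Finset.Ico_self]
        simp
    | succ q IH =>
        intro hq
        have h1 : E 0 + 1 ≤ E (q * k) + 1 := by
          have := hEmono (Nat.zero_le (q * k)); omega
        have h2 : E (q * k) + 1 ≤ E ((q + 1) * k) + 1 := by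
          have := hEmono (by nlinarith : q * k ≤ (q + 1) * k); omega
        rw [← Finset.sum_Ico_consecutive f h1 h2]
        have hwin : (1 : ℝ) ≤ ∑ i ∈ Finset.Ico (E (q * k) + 1) (E ((q + 1) * k) + 1), f i := by
          have hqk : q * k + k + 1 ≤ mA := by
            have : q * k ≤ Q * k := Nat.mul_le_mul_right _ (by omega)
            omega
          have := certA_window A c₀ hA hlazy hk mA os hos (q * k) hqk
          have hexp : (q + 1) * k = q * k + k := by ring
          rw [hexp]
          exact this
        have hprev := IH (by omega)
        push_cast
        linarith
  have hsub : Finset.Ico (E 0 + 1) (E (Q * k) + 1) ⊆ Finset.range σ.length := by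
    intro x hx
    rw [Finset.mem_Ico] at hx
    rw [Finset.mem_range, hn]
    have h1 : (2 * k - 1) * (Q * k + 1) ≤ (2 * k - 1) * mA :=
      Nat.mul_le_mul_left _ (by omega)
    have h2 : (2 * k - 1) * (Q * k + 1) = (2 * k - 1) * (Q * k) + (2 * k - 1) :=
      Nat.mul_succ _ _
    simp only [hEdef] at hx
    omega
  calc (Q : ℝ) ≤ ∑ i ∈ Finset.Ico (E 0 + 1) (E (Q * k) + 1), f i := hchunk Q le_rfl
    _ ≤ ∑ i ∈ Finset.range σ.length, f i :=
        Finset.sum_le_sum_of_subset_of_nonneg hsub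
          (fun i _ _ => configCost_nonneg _ _)
    _ = offlineCost unif σ os := rfl

end CertA

end KServerPref
namespace KServerPref

theorem adaptive_lower_bound_large_s' (k : ℕ) (hk : 2 ≤ k)
    (A : Alg (Fin k) (Fin (k + 1))) (hA : IsOnline A) (hlazy : IsLazy A)
    (s : ℚ) (hs0 : (k : ℚ) / (2 * k - 1) ≤ s) (hs1 : s ≤ 1) (C : ℝ) :
    ∃ (c₀ : Fin k → Fin (k + 1)) (σ : List (Request (Fin k) (Fin (k + 1)))),
      AllRequireMove A c₀ σ ∧
      SpecFraction σ s ∧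
      C ≤ OPT unif c₀ σ ∧
      (1 / (2 * (s : ℝ) - 1)) * OPT unif c₀ σ ≤ algCost unif A c₀ σ := by
  haveI : NeZero k := ⟨by omega⟩
  have hk1 : 1 ≤ k := by omega
  -- rational bookkeeping
  set a : ℕ := s.num.toNat with ha_def
  set b : ℕ := s.den with hb_def
  have hbQ : (0 : ℚ) < (b : ℚ) := by exact_mod_cast s.pos
  have hkQ : (2 : ℚ) ≤ (k : ℚ) := by exact_mod_cast hk
  have h2k1 : (0 : ℚ) < 2 * (k : ℚ) - 1 := by linarith
  have hspos : 0 < s :=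
    lt_of_lt_of_le (div_pos (by linarith) h2k1) hs0
  have hnum : ((a : ℤ) : ℚ) = (s.num : ℚ) := by
    rw [ha_def, Int.toNat_of_nonneg (le_of_lt (Rat.num_pos.2 hspos))]
  have hab : s = (a : ℚ) / (b : ℚ) := by
    rw [← Rat.num_div_den s]
    rw [show ((a : ℕ) : ℚ) = (s.num : ℚ) by exact_mod_cast hnum, hb_def]
  have ha0 : 0 < a := by
    rw [ha_def]
    have := Rat.num_pos.2 hspos
    omega
  have hba : a ≤ b := by
    rw [hab] at hs1
    have : (a : ℚ) ≤ (b : ℚ) := by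
      rwa [div_le_one hbQ] at hs1
    exact_mod_cast this
  have hub : k * b ≤ a * (2 * k - 1) := by
    rw [hab] at hs0
    rw [div_le_div_iff₀ h2k1 hbQ] at hs0
    have hcast : ((k * b : ℕ) : ℚ) ≤ ((a * (2 * k - 1) : ℕ) : ℚ) := by
      push_cast [Nat.cast_sub (show 1 ≤ 2 * k by omega)]
      linarith
    exact_mod_cast hcast
  set u : ℕ := a * (2 * k - 1) - k * b with hu_def
  set w : ℕ := b - a with hw_def
  have hb2a : b + 1 ≤ 2 * a := by
    by_contra hcon
    push_neg at hcon
    have h2ab : 2 * a ≤ b := by omega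
    have h1 : k * (2 * a) ≤ k * b := Nat.mul_le_mul_left k h2ab
    have h2 : k * b ≤ a * (2 * k - 1) := hub
    zify [show 1 ≤ 2 * k by omega] at h1 h2
    nlinarith
  -- the parameters
  set N : ℕ := ⌈C⌉₊ + 1 with hN_def
  have hN1 : 1 ≤ N := by omega
  have hNC : C ≤ (N : ℝ) := by
    calc C ≤ (⌈C⌉₊ : ℝ) := Nat.le_ceil C
      _ ≤ (N : ℝ) := by exact_mod_cast (by omega : ⌈C⌉₊ ≤ N)
  set t : ℕ := k * N + 1 with ht_def
  set mA : ℕ := 2 * w * t with hmA_def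
  set mB : ℕ := u * t with hmB_def
  set c0 : Fin k → Fin (k + 1) := fun _ => ⟨0, by omega⟩ with hc0_def
  set σ := runB A c0 (runA A c0 mA) mB with hσ_def
  -- counting
  have id1 : k * (2 * w) + 2 * u = 2 * a * (k - 1) := by
    rw [hu_def, hw_def]
    zify [hub, hba, show 1 ≤ 2 * k by omega, hk1]
    ring
  have id2 : (2 * k - 1) * (2 * w) + 2 * u = 2 * b * (k - 1) := by
    rw [hu_def, hw_def]
    zify [hub, hba, show 1 ≤ 2 * k by omega, hk1]
    ring
  have hlen : σ.length = 2 * b * (k - 1) * t := by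
    rw [hσ_def, runB_length, runA_length A c0 hA hlazy hk1]
    calc (2 * k - 1) * (2 * w * t) + 2 * (u * t)
        = ((2 * k - 1) * (2 * w) + 2 * u) * t := by ring
      _ = 2 * b * (k - 1) * t := by rw [id2]
  have hcount : σ.countP Request.isSpec = 2 * a * (k - 1) * t := by
    rw [hσ_def, runB_countP, runA_countP A c0 hA hlazy hk1]
    calc k * (2 * w * t) + 2 * (u * t)
        = (k * (2 * w) + 2 * u) * t := by ring
      _ = 2 * a * (k - 1) * t := by rw [id1]
  have hlenpos : 0 < 2 * b * (k - 1) * t :=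
    Nat.mul_pos (Nat.mul_pos (Nat.mul_pos two_pos s.pos) (by omega)) (by omega)
  -- all requests require a move
  have hforce : ForcedFrom A c0 [] σ :=
    runB_forced A c0 hA hlazy _ mB (runA_forced A c0 hA hlazy hk1 mA)
  have hARM : AllRequireMove A c0 σ := by
    intro i
    have := hforce i.1 i.2
    rwa [List.nil_append] at this
  -- spec fraction
  have hSF : SpecFraction σ s := by
    unfold SpecFraction
    rw [hcount, hlen, hab]
    have hbne : ((b : ℚ)) ≠ 0 := ne_of_gt hbQ
    have hk1ne : ((k : ℚ) - 1) ≠ 0 := by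
      intro hx
      have : (k : ℚ) = 1 := by linarith
      have : (k : ℕ) = 1 := by exact_mod_cast this
      omega
    have htne : ((t : ℚ)) ≠ 0 := by
      have : (0 : ℚ) < t := by exact_mod_cast (show 0 < t by omega)
      exact ne_of_gt this
    push_cast [Nat.cast_sub hk1]
    field_simp
  -- OPT bounds
  obtain ⟨hosne, hOPTle⟩ := opt_upper A c0 hA hlazy hk1 mA mB
  rw [← hσ_def] at hosne hOPTle
  have halg : algCost unif A c0 σ = (σ.length : ℝ) :=
    algCost_of_forced A c0 hA hlazy σ hforce
  -- C ≤ OPT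
  have hCopt : C ≤ OPT unif c0 σ := by
    refine le_trans hNC (le_opt c0 σ (N : ℝ) hosne ?_)
    intro os hos
    by_cases hu0 : u = 0
    · -- pure type-A phase, use window certificate
      have hmB0 : mB = 0 := by rw [hmB_def, hu0]; simp
      have hw1 : 1 ≤ w := by
        rcases Nat.eq_zero_or_pos w with hw0 | hw0
        · exfalso
          have hba' : b ≤ a := by omega
          have habq : a = b := le_antisymm hba hba'
          have : u = a * (2 * k - 1) - k * a := by rw [hu_def, habq]
          rw [this] at hu0
          have h1 : k * a + a * (k - 1) = a * (2 * k - 1) := by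
            zify [show 1 ≤ 2 * k by omega, hk1]
            ring
          have h2 : 0 < a * (k - 1) := Nat.mul_pos ha0 (by omega)
          omega
        · omega
      have hσA : σ = runA A c0 mA := by
        rw [hσ_def, hmB0]
        rfl
      have hQbound : N * k + k + 1 ≤ mA := by
        have hh : N * k ≤ N * k := le_rfl
        have h1 : N * k + k + 1 ≤ 2 * t := by
          rw [ht_def, Nat.mul_comm k N]
          have hkN : k ≤ N * k := by
            calc k = 1 * k := (Nat.one_mul k).symm
              _ ≤ N * k := Nat.mul_le_mul_right k hN1
          omega
        have h2 : 2 * t ≤ mA := by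
          rw [hmA_def]
          exact Nat.mul_le_mul_right t (by omega : 2 ≤ 2 * w)
        omega
      rw [hσA] at hos ⊢
      exact certA A c0 hA hlazy hk1 mA N hQbound os hos
    · -- use type-B certificate
      have hNmB : N ≤ mB := by
        have h1 : N ≤ t := by
          rw [ht_def]
          have := Nat.le_mul_of_pos_left N (show 0 < k by omega)
          omega
        have h2 : t ≤ mB := by
          rw [hmB_def]
          exact Nat.le_mul_of_pos_left t (by omega)
        omega
      have := certB A c0 hA hlazy mA mB os (by rw [hσ_def] at hos; exact hos)
      rw [← hσ_def] at this
      calc (N : ℝ) ≤ (mB : ℝ) := by exact_mod_cast hNmB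
        _ ≤ _ := this
  -- the ratio
  have hsR : (s : ℝ) = (a : ℝ) / (b : ℝ) := by
    rw [hab]
    push_cast
    ring
  have hbR : (0 : ℝ) < (b : ℝ) := by exact_mod_cast s.pos
  have hkey : 2 * (s : ℝ) - 1 = (2 * (a : ℝ) - (b : ℝ)) / (b : ℝ) := by
    rw [hsR]
    field_simp
  have h2s1 : (0 : ℝ) < 2 * (s : ℝ) - 1 := by
    rw [hkey]
    apply div_pos _ hbR
    have : ((b : ℝ)) + 1 ≤ 2 * (a : ℝ) := by exact_mod_cast hb2a
    linarith
  have h_eq : (mA : ℝ) + 2 * (mB : ℝ) = (2 * (s : ℝ) - 1) * (σ.length : ℝ) := by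
    rw [hkey, hlen, hmA_def, hmB_def, hw_def, hu_def]
    push_cast [Nat.cast_sub hba, Nat.cast_sub hub, Nat.cast_sub (show 1 ≤ 2 * k by omega),
      Nat.cast_sub hk1]
    field_simp
    ring
  have hOPT2 : OPT unif c0 σ ≤ (2 * (s : ℝ) - 1) * (σ.length : ℝ) := by
    rw [← h_eq]
    exact hOPTle
  have hratio : (1 / (2 * (s : ℝ) - 1)) * OPT unif c0 σ ≤ algCost unif A c0 σ := by
    calc (1 / (2 * (s : ℝ) - 1)) * OPT unif c0 σ
        ≤ (1 / (2 * (s : ℝ) - 1)) * ((2 * (s : ℝ) - 1) * (σ.length : ℝ)) := by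
          apply mul_le_mul_of_nonneg_left hOPT2
          positivity
      _ = (σ.length : ℝ) := by
          field_simp
      _ = algCost unif A c0 σ := halg.symm
  exact ⟨c0, σ, hARM, hSF, hCopt, hratio⟩

end KServerPref
namespace KServerPref

/-- Adaptive lower bound, case `k/(2k-1) ≤ s ≤ 1`: for every lazy deterministic
online algorithm on the uniform metric on `k+1` points there are inputs with
specific-request share exactly `s`, all of whose requests require a movement,
with arbitrarily large optimal cost, on which the algorithm's cost is at least
`1/(2s-1)` times the optimal cost. -/
theorem adaptive_lower_bound_large_s (k : ℕ) (hk : 2 ≤ k)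
    (A : Alg (Fin k) (Fin (k + 1))) (hA : IsOnline A) (hlazy : IsLazy A)
    (s : ℚ) (hs0 : (k : ℚ) / (2 * k - 1) ≤ s) (hs1 : s ≤ 1) (C : ℝ) :
    ∃ (c₀ : Fin k → Fin (k + 1)) (σ : List (Request (Fin k) (Fin (k + 1)))),
      AllRequireMove A c₀ σ ∧
      SpecFraction σ s ∧
      C ≤ OPT unif c₀ σ ∧
      (1 / (2 * (s : ℝ) - 1)) * OPT unif c₀ σ ≤ algCost unif A c₀ σ := by
  exact adaptive_lower_bound_large_s' k hk A hA hlazy s hs0 hs1 C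

end KServerPref
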